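/- Let p \ge 2 be an even integer and R > 0. For each integer n \ge 3, let \rho_n^{(2)}(x,y) = Vol_{n-2}({(x_3,...,x_n) : x^p + y^p + x_3^p + ... + x_n^p \le nR^p}) / Vol_n(M_n) be the joint marginal density of the first two coordinates of the uniform distribution on M_n = {x \in \mathbb{R}^n : \sum x_k^p \le nR^p}. Then for every fixed (x,y) \in \mathbb{R}^2, \rho_n^{(2)}(x,y) converges as n \to \infty to \rho(x)\rho(y), where \rho(x) = (1 / (2 R \Gamma(1/p) p^{1/p - 1})) e^{-x^p/(pR^p)}; i.e., the first two coordinates become independent in the limit, each with density \rho. -/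

import Mathlib

open MeasureTheory Real Filter Set

/-! By the Dirichlet formula, `{z ∈ ℝᵐ : ∑ zᵢᵖ ≤ s}` has volume `s^(m/p) (2Γ(1/p+1))^m / Γ(m/p+1)`,
so the marginal density is explicit. With `s = xᵖ + yᵖ` and `τ = (n-2)/p + 1` it factors as
`(1 - s/(nRᵖ))^((n-2)/p) · Γ(τ + 2/p)/(Γ(τ) τ^(2/p)) · (τ/(nRᵖ))^(2/p) / (2Γ(1/p+1))²`.
The first factor tends to `exp(-s/(pRᵖ))`, the third to `(pRᵖ)^(-2/p)`, and the Gamma ratio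
tends to `1` by Gautschi's inequality `(t/(t+σ))^(1-σ) ≤ Γ(t+σ)/(Γ(t) t^σ) ≤ 1` for `0 ≤ σ ≤ 1`,
a consequence of the log-convexity of `Γ`. -/

theorem Real.Gamma_add_le_Gamma_mul_rpow {t σ : ℝ} (ht : 0 < t) (hσ₀ : 0 ≤ σ) (hσ₁ : σ ≤ 1) :
    Gamma (t + σ) ≤ Gamma t * t ^ σ := by
  have hΓ : 0 < Gamma t := Gamma_pos_of_pos ht
  have hconv := convexOn_log_Gamma.2 (mem_Ioi.2 ht) (mem_Ioi.2 (by linarith : 0 < t + 1))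
    (sub_nonneg.2 hσ₁) hσ₀ (sub_add_cancel 1 σ)
  simp only [Function.comp_apply, smul_eq_mul] at hconv
  rw [show (1 - σ) * t + σ * (t + 1) = t + σ by ring, Gamma_add_one ht.ne',
    log_mul ht.ne' hΓ.ne'] at hconv
  rw [← log_le_log_iff (Gamma_pos_of_pos (by linarith)) (by positivity),
    log_mul hΓ.ne' (rpow_pos_of_pos ht σ).ne', log_rpow ht]
  linarith

theorem Real.Gamma_mul_le_Gamma_add_mul_rpow {t σ : ℝ} (ht : 0 < t) (hσ₀ : 0 ≤ σ) (hσ₁ : σ ≤ 1) :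
    Gamma t * t ≤ Gamma (t + σ) * (t + σ) ^ (1 - σ) := by
  have h := Gamma_add_le_Gamma_mul_rpow (by linarith : 0 < t + σ) (sub_nonneg.2 hσ₁)
    (by linarith : 1 - σ ≤ 1)
  rwa [add_add_sub_cancel, Gamma_add_one ht.ne', mul_comm t] at h

noncomputable def gammaRatio (σ t : ℝ) : ℝ := Gamma (t + σ) / (Gamma t * t ^ σ)

theorem tendsto_gammaRatio_atTop {σ : ℝ} (hσ₀ : 0 ≤ σ) (hσ₁ : σ ≤ 1) :
    Tendsto (gammaRatio σ) atTop (nhds 1) := by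
  have hfrac : Tendsto (fun t : ℝ => t / (t + σ)) atTop (nhds 1) := by
    have h := (tendsto_const_nhds (x := (1 : ℝ))).sub
      ((tendsto_const_nhds (x := σ)).div_atTop (tendsto_atTop_add_const_right atTop σ tendsto_id))
    rw [sub_zero] at h
    refine h.congr' ?_
    filter_upwards [eventually_gt_atTop 0] with t ht
    have : t + σ ≠ 0 := by linarith
    simp only [id]
    field_simp
    ring
  have hlower : Tendsto (fun t : ℝ => (t / (t + σ)) ^ (1 - σ)) atTop (nhds 1) := by
    simpa using hfrac.rpow_const (p := 1 - σ) (Or.inl one_ne_zero)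
  refine tendsto_of_tendsto_of_tendsto_of_le_of_le' hlower tendsto_const_nhds ?_ ?_
  all_goals filter_upwards [eventually_gt_atTop 0] with t ht
  · rw [gammaRatio, le_div_iff₀ (by positivity), div_rpow ht.le (by linarith),
      div_mul_eq_mul_div, div_le_iff₀ (by positivity)]
    calc t ^ (1 - σ) * (Gamma t * t ^ σ) = Gamma t * t := by
          rw [mul_left_comm, ← rpow_add ht, sub_add_cancel, rpow_one, mul_comm]
      _ ≤ Gamma (t + σ) * (t + σ) ^ (1 - σ) := Gamma_mul_le_Gamma_add_mul_rpow ht hσ₀ hσ₁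
  · rw [gammaRatio, div_le_one (by positivity)]
    exact Gamma_add_le_Gamma_mul_rpow ht hσ₀ hσ₁

theorem tendsto_one_add_div_rpow_sub_div_exp (c b a : ℝ) :
    Tendsto (fun x : ℝ => (1 + c / x) ^ ((x - b) / a)) atTop (nhds (exp (c / a))) := by
  have hbase : Tendsto (fun x : ℝ => 1 + c / x) atTop (nhds 1) := by
    simpa using tendsto_const_nhds.add ((tendsto_const_nhds (x := c)).div_atTop tendsto_id)
  have h := ((tendsto_one_add_div_rpow_exp c).rpow_const (p := 1 / a)
    (Or.inl (exp_pos c).ne')).div (hbase.rpow_const (p := b / a) (Or.inl one_ne_zero)) (by simp)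
  rw [← exp_mul, mul_one_div, one_rpow, div_one] at h
  refine h.congr' ?_
  filter_upwards [hbase.eventually (lt_mem_nhds one_pos)] with x hx
  rw [Pi.div_apply, ← rpow_mul hx.le, ← rpow_sub hx, mul_one_div, sub_div]

theorem toReal_volume_setOf_sum_pow_le {ι : Type*} [Fintype ι] [Nonempty ι] {p : ℕ}
    (hp : Even p) (hp₀ : p ≠ 0) {s : ℝ} (hs : 0 ≤ s) :
    (volume {z : ι → ℝ | ∑ i, z i ^ p ≤ s}).toReal =
      s ^ (Fintype.card ι / p : ℝ) * (2 * Gamma (1 / p + 1)) ^ Fintype.card ι /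
        Gamma (Fintype.card ι / p + 1) := by
  have hp_pos : (0 : ℝ) < p := by positivity
  have hset : {z : ι → ℝ | ∑ i, z i ^ p ≤ s} =
      {z : ι → ℝ | (∑ i, |z i| ^ (p : ℝ)) ^ (1 / (p : ℝ)) ≤ s ^ (1 / (p : ℝ))} := by
    ext z
    have hsum : ∑ i, z i ^ p = ∑ i, |z i| ^ (p : ℝ) := by
      simp only [rpow_natCast, hp.pow_abs]
    rw [mem_ofPred_eq, mem_ofPred_eq, hsum, rpow_le_rpow_iff
      (Finset.sum_nonneg fun i _ => by positivity) hs (by positivity)]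
  have hp₁ : (1 : ℝ) ≤ p := by exact_mod_cast Nat.one_le_iff_ne_zero.2 hp₀
  rw [hset, volume_sum_rpow_le _ hp₁, ENNReal.toReal_mul, ENNReal.toReal_pow,
    ENNReal.toReal_ofReal (by positivity), ENNReal.toReal_ofReal, ← rpow_natCast,
    ← rpow_mul hs, mul_div_assoc]
  · ring_nf
  · positivity

theorem toReal_volume_slice_div_eq {p n : ℕ} (hp : Even p) (hp₀ : p ≠ 0) (hn : 3 ≤ n) {A s : ℝ}
    (hA : 0 < A) (hs : s < n * A) :
    (volume {z : Fin (n - 2) → ℝ | s + ∑ i, z i ^ p ≤ n * A}).toReal /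
        (volume {w : Fin n → ℝ | ∑ i, w i ^ p ≤ n * A}).toReal =
      (1 + -s / A / n) ^ (((n : ℝ) - 2) / p) * gammaRatio (2 / p) (((n : ℝ) - 2) / p + 1) *
        ((1 / p + (1 - 2 / p) / n) / A) ^ (2 / p : ℝ) / (2 * Gamma (1 / p + 1)) ^ 2 := by
  have hnA : 0 < n * A := mul_pos (by positivity) hA
  have hp_pos : (0 : ℝ) < p := by positivity
  have hτ : 0 < ((n : ℝ) - 2) / p + 1 := by
    have : (3 : ℝ) ≤ n := by exact_mod_cast hn
    have : 0 ≤ ((n : ℝ) - 2) / p := div_nonneg (by linarith) hp_pos.le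
    linarith
  have hnum : {z : Fin (n - 2) → ℝ | s + ∑ i, z i ^ p ≤ n * A} =
      {z : Fin (n - 2) → ℝ | ∑ i, z i ^ p ≤ n * A - s} := by
    ext z
    simp only [mem_ofPred_eq, le_sub_iff_add_le']
  have : Nonempty (Fin (n - 2)) := Fin.pos_iff_nonempty.1 (by omega)
  have : Nonempty (Fin n) := Fin.pos_iff_nonempty.1 (by omega)
  rw [hnum, toReal_volume_setOf_sum_pow_le hp hp₀ (by linarith),
    toReal_volume_setOf_sum_pow_le hp hp₀ hnA.le, Fintype.card_fin, Fintype.card_fin,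
    Nat.cast_sub (by omega : 2 ≤ n), Nat.cast_two]
  have hbase : (n * A - s) = (1 + -s / A / n) * (n * A) := by field_simp; ring
  have hsplit : (n * A) ^ ((n : ℝ) / p) =
      (n * A) ^ (((n : ℝ) - 2) / p) * (n * A) ^ (2 / p : ℝ) := by
    rw [← rpow_add hnA]; ring_nf
  have hτ' : (1 / p + (1 - 2 / p) / n) / A = (((n : ℝ) - 2) / p + 1) / (n * A) := by
    field_simp; ring
  have hτσ : ((n : ℝ) - 2) / p + 1 + 2 / p = n / p + 1 := by ring
  have hpow : (2 * Gamma (1 / p + 1)) ^ n =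
      (2 * Gamma (1 / p + 1)) ^ (n - 2) * (2 * Gamma (1 / p + 1)) ^ 2 := by
    rw [← pow_add, Nat.sub_add_cancel (by omega)]
  have hbase_pos : 0 < 1 + -s / A / n :=
    (mul_pos_iff_of_pos_right hnA).1 (hbase ▸ sub_pos.2 hs)
  rw [hbase, mul_rpow hbase_pos.le hnA.le, hsplit, hτ', div_rpow hτ.le hnA.le, gammaRatio, hτσ,
    hpow]
  have key : ∀ B X Y K L G₁ G₂ T : ℝ, X ≠ 0 → Y ≠ 0 → K ≠ 0 → L ≠ 0 → G₁ ≠ 0 → T ≠ 0 →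
      B * X * K / G₁ / (X * Y * (K * L) / G₂) = B * (G₂ / (G₁ * T)) * (T / Y) / L := by
    intros
    field_simp
  exact key _ _ _ _ _ _ _ _ (by positivity) (by positivity) (by positivity) (by positivity)
    (by positivity) (by positivity)

noncomputable def lpMarginalDensity (p : ℕ) (R x : ℝ) : ℝ :=
  1 / (2 * R * Gamma (1 / (p : ℝ)) * (p : ℝ) ^ ((1 : ℝ) / p - 1)) *
    Real.exp (-(x ^ p) / (p * R ^ p))

theorem lpMarginalDensity_mul {p : ℕ} (hp₀ : p ≠ 0) {R : ℝ} (hR : 0 < R) (x y : ℝ) :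
    lpMarginalDensity p R x * lpMarginalDensity p R y =
      exp (-(x ^ p + y ^ p) / R ^ p / p) * (1 / p / R ^ p) ^ (2 / p : ℝ) /
        (2 * Gamma (1 / p + 1)) ^ 2 := by
  have hp_pos : (0 : ℝ) < p := by positivity
  have hroot : (1 / p / R ^ p) ^ (1 / p : ℝ) = (p ^ (1 / p : ℝ) * R)⁻¹ := by
    rw [div_div, one_div, inv_rpow (by positivity), mul_rpow hp_pos.le (by positivity),
      ← rpow_natCast, ← rpow_mul hR.le, mul_one_div_cancel hp_pos.ne', rpow_one]
  have hsq : (1 / p / R ^ p) ^ (2 / p : ℝ) = (p ^ (1 / p : ℝ) * R)⁻¹ ^ 2 := by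
    rw [← hroot, ← rpow_mul_natCast (by positivity)]
    ring_nf
  rw [lpMarginalDensity, lpMarginalDensity, hsq, rpow_sub hp_pos, rpow_one,
    Gamma_add_one (by positivity), mul_mul_mul_comm, ← exp_add]
  have : 0 < Gamma (1 / p) := by positivity
  have : 0 < (p : ℝ) ^ (1 / p : ℝ) := by positivity
  field_simp
  ring_nf

/-- Asymptotic independence of the first two coordinates: the joint marginal density
`ρₙ⁽²⁾(x,y)` of the first two coordinates of the uniform distribution on the `ℓᵖ` ball
`Mₙ = {x ∈ ℝⁿ : ∑ xₖᵖ ≤ nRᵖ}` (`p` even) converges, as `n → ∞`, to `ρ(x)ρ(y)` where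
`ρ(x) = e^(-xᵖ/(pRᵖ)) / (2 R Γ(1/p) p^(1/p - 1))`. -/
theorem stmt_10 (p : ℕ) (hp : Even p) (hp2 : 2 ≤ p) (R : ℝ) (hR : 0 < R) (x y : ℝ) :
    Tendsto
      (fun n : ℕ =>
        (volume {z : Fin (n - 2) → ℝ |
            x ^ p + y ^ p + ∑ i, (z i) ^ p ≤ (n : ℝ) * R ^ p}).toReal /
          (volume {w : Fin n → ℝ | ∑ i, (w i) ^ p ≤ (n : ℝ) * R ^ p}).toReal)
      atTop
      (nhds
        ((1 / (2 * R * Gamma (1 / (p : ℝ)) * (p : ℝ) ^ ((1 : ℝ) / p - 1)) *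
            Real.exp (-(x ^ p) / (p * R ^ p))) *
          (1 / (2 * R * Gamma (1 / (p : ℝ)) * (p : ℝ) ^ ((1 : ℝ) / p - 1)) *
            Real.exp (-(y ^ p) / (p * R ^ p))))) := by
  have hp₀ : p ≠ 0 := by omega
  have hp_pos : (0 : ℝ) < p := by positivity
  have hσ₁ : (2 / p : ℝ) ≤ 1 := by rw [div_le_one hp_pos]; exact_mod_cast hp2
  have hτ : Tendsto (fun n : ℕ => ((n : ℝ) - 2) / p + 1) atTop atTop :=
    tendsto_atTop_add_const_right _ _ <|
      (tendsto_atTop_add_const_right _ _ tendsto_natCast_atTop_atTop).atTop_div_const hp_pos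
  have hlin : Tendsto (fun n : ℕ => (1 / p + (1 - 2 / p) / n) / R ^ p) atTop
      (nhds (1 / p / R ^ p)) := by
    simpa using ((tendsto_const_div_atTop_nhds_zero_nat (1 - 2 / p : ℝ)).const_add
      (1 / p : ℝ)).div_const (R ^ p)
  have hlim := ((((tendsto_one_add_div_rpow_sub_div_exp (-(x ^ p + y ^ p) / R ^ p) 2 p).comp
      tendsto_natCast_atTop_atTop).mul ((tendsto_gammaRatio_atTop (by positivity) hσ₁).comp hτ)).mul
      (hlin.rpow_const (p := 2 / p) (Or.inr (by positivity)))).div_const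
    ((2 * Gamma (1 / p + 1)) ^ 2)
  rw [mul_one, ← lpMarginalDensity_mul hp₀ hR] at hlim
  refine hlim.congr' ?_
  filter_upwards [eventually_ge_atTop 3, eventually_gt_atTop ⌈(x ^ p + y ^ p) / R ^ p⌉₊]
    with n hn hns
  refine (toReal_volume_slice_div_eq hp hp₀ hn (by positivity) ?_).symm
  rw [← div_lt_iff₀ (by positivity)]
  exact (Nat.le_ceil _).trans_lt (by exact_mod_cast hns)
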